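/- arXiv:1205.5631 — 4 statements merged into one kernel-verified Lean document; each statement's English description precedes it below -/
import Mathlib

section
/- If G is a connected graph with girth(G) ≥ 5 such that the line graph L(G) is well-covered, then cochord(G) = m(G). -/
open SimpleGraph

variable {V : Type*}

/-- The closed neighborhood `N_G[x]` of a vertex. -/
def closedNbhd (G : SimpleGraph V) (x : V) : Set V := insert x (G.neighborSet x)

/-- `x` is codominated: some `y ≠ x` has `N_G[y] ⊆ N_G[x]`. -/
def Codominated (G : SimpleGraph V) (x : V) : Prop :=
  ∃ y, y ≠ x ∧ closedNbhd G y ⊆ closedNbhd G x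

/-- `S` is an independent set of `G`. -/
def IsIndep (G : SimpleGraph V) (S : Set V) : Prop :=
  ∀ ⦃u⦄, u ∈ S → ∀ ⦃v⦄, v ∈ S → ¬ G.Adj u v

/-- `x` is a shedding vertex of `G`: every independent set of `G - N_G[x]`
extends by a neighbor of `x`. -/
def SheddingVertex (G : SimpleGraph V) (x : V) : Prop :=
  ∀ S : Set V, S ⊆ (closedNbhd G x)ᶜ → IsIndep G S →
    ∃ v ∈ G.neighborSet x, IsIndep G (insert v S)

/-- The closed neighborhood `N_G[I]` of a set of vertices. -/
def closedNbhdSet (G : SimpleGraph V) (I : Set V) : Set V :=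
  I ∪ {v | ∃ u ∈ I, G.Adj u v}

/-- `x` is codominated in the subgraph of `G` induced on `A`. -/
def CodominatedOn (G : SimpleGraph V) (A : Finset V) (x : V) : Prop :=
  ∃ y ∈ A, y ≠ x ∧ ∀ z ∈ A, (z = y ∨ G.Adj y z) → (z = x ∨ G.Adj x z)

/-- The subgraph of `G` induced on `A` is codismantlable. -/
def CodismantlableOn (G : SimpleGraph V) [DecidableEq V] (A : Finset V) : Prop :=
  (∀ x ∈ A, ∀ y ∈ A, ¬ G.Adj x y) ∨
    ∃ x, ∃ h : x ∈ A, CodominatedOn G A x ∧ CodismantlableOn G (A.erase x)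
termination_by A.card
decreasing_by exact Finset.card_erase_lt_of_mem h

/-- `G` is codismantlable. -/
def Codismantlable (G : SimpleGraph V) [Fintype V] [DecidableEq V] : Prop :=
  CodismantlableOn G Finset.univ

/-- A maximal independent set of `G`. -/
def MaxIndep (G : SimpleGraph V) (S : Set V) : Prop :=
  IsIndep G S ∧ ∀ T : Set V, IsIndep G T → S ⊆ T → S = T

/-- `G` is well-covered: all maximal independent sets have the same size. -/
def WellCovered (G : SimpleGraph V) : Prop :=
  ∀ S T : Set V, MaxIndep G S → MaxIndep G T → S.ncard = T.ncard

/-- `G` has no induced cycle of length `n`. -/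
def CycleFree (G : SimpleGraph V) (n : ℕ) : Prop :=
  IsEmpty (cycleGraph n ↪g G)

/-- `G` is chordal: no induced cycle of length at least 4. -/
def Chordal (G : SimpleGraph V) : Prop :=
  ∀ n, 4 ≤ n → CycleFree G n

/-- `M` is a matching of `G` (as a set of edges). -/
def IsMatchingSet (G : SimpleGraph V) (M : Finset (Sym2 V)) : Prop :=
  (∀ e ∈ M, e ∈ G.edgeSet) ∧
    ∀ e ∈ M, ∀ f ∈ M, e ≠ f → ∀ v : V, v ∈ e → v ∉ f

/-- `M` is an induced matching of `G`. -/
def IsInducedMatching (G : SimpleGraph V) (M : Finset (Sym2 V)) : Prop :=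
  IsMatchingSet G M ∧
    ∀ e ∈ M, ∀ f ∈ M, e ≠ f → ∀ u : V, u ∈ e → ∀ v : V, v ∈ f → ¬ G.Adj u v

/-- The matching number `m(G)`. -/
noncomputable def matchNum (G : SimpleGraph V) : ℕ :=
  sSup {n | ∃ M : Finset (Sym2 V), IsMatchingSet G M ∧ M.card = n}

/-- The induced matching number `im(G)`. -/
noncomputable def indMatchNum (G : SimpleGraph V) : ℕ :=
  sSup {n | ∃ M : Finset (Sym2 V), IsInducedMatching G M ∧ M.card = n}

open Classical in
/-- The vertices of `A` outside the closed neighborhood of `x`. -/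
noncomputable def delNbhd (G : SimpleGraph V) [DecidableEq V] (A : Finset V) (x : V) : Finset V :=
  A.filter (fun z => ¬(z = x ∨ G.Adj x z))

/-- `x` is a shedding vertex of the subgraph of `G` induced on `A`. -/
def SheddingOn (G : SimpleGraph V) (A : Finset V) (x : V) : Prop :=
  ∀ S : Set V, S ⊆ ↑A → (∀ u ∈ S, ¬(u = x ∨ G.Adj x u)) → IsIndep G S →
    ∃ v ∈ A, G.Adj x v ∧ IsIndep G (insert v S)

lemma delNbhd_ssubset (G : SimpleGraph V) [DecidableEq V] {A : Finset V} {x : V}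
    (h : x ∈ A) : delNbhd G A x ⊂ A := by
  classical
  refine (Finset.ssubset_iff_of_subset (Finset.filter_subset _ _)).mpr ⟨x, h, ?_⟩
  simp [delNbhd]

/-- The subgraph of `G` induced on `A` is vertex decomposable. -/
noncomputable def VertexDecomposableOn (G : SimpleGraph V) [DecidableEq V] (A : Finset V) :
    Prop :=
  (∀ x ∈ A, ∀ y ∈ A, ¬ G.Adj x y) ∨
    ∃ x, ∃ h : x ∈ A, SheddingOn G A x ∧ VertexDecomposableOn G (A.erase x) ∧
      VertexDecomposableOn G (delNbhd G A x)
termination_by A.card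
decreasing_by
  · exact Finset.card_erase_lt_of_mem h
  · exact Finset.card_lt_card (delNbhd_ssubset G h)

/-- `G` is vertex decomposable. -/
noncomputable def VertexDecomposable (G : SimpleGraph V) [Fintype V] [DecidableEq V] : Prop :=
  VertexDecomposableOn G Finset.univ

/-- The restriction of `G` to `A` codismantles to its restriction to `B`. -/
inductive CodisTo (G : SimpleGraph V) [DecidableEq V] : Finset V → Finset V → Prop
  | refl (A : Finset V) : CodisTo G A A
  | step {A B : Finset V} {x : V} (h : x ∈ A) (hc : CodominatedOn G A x)
      (ht : CodisTo G (A.erase x) B) : CodisTo G A B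

/-- `L` is a codismantling sequence for the subgraph of `G` induced on `A`. -/
def CodisSeq (G : SimpleGraph V) [DecidableEq V] : Finset V → List V → Prop
  | A, [] => ∀ x ∈ A, ∀ y ∈ A, ¬ G.Adj x y
  | A, x :: xs => x ∈ A ∧ CodominatedOn G A x ∧ CodisSeq G (A.erase x) xs

/-- `C` is a vertex cover of `G`. -/
def IsVertexCover (G : SimpleGraph V) (C : Set V) : Prop :=
  ∀ ⦃u v : V⦄, G.Adj u v → u ∈ C ∨ v ∈ C

/-- The co-chordal cover number: the minimum number of co-chordal subgraphs of `G`
covering all edges of `G`. -/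
noncomputable def cochord (G : SimpleGraph V) : ℕ :=
  sInf {k | ∃ H : Fin k → G.Subgraph, (∀ i, Chordal ((H i).coeᶜ)) ∧
    ∀ e ∈ G.edgeSet, ∃ i, e ∈ (H i).edgeSet}

/-- The domination number of a graph. -/
noncomputable def domNum {W : Type*} (K : SimpleGraph W) : ℕ :=
  sInf {n | ∃ D : Finset W, (∀ v : W, v ∈ D ∨ ∃ u ∈ D, K.Adj u v) ∧ D.card = n}

/-!
A co-chordal subgraph `H` of a graph of girth at least `5` has no two edges joined by no edge
(their ends would span an induced `4`-cycle of the complement) and no `5`-cycle (a `5`-cycle is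
self-complementary, and girth `5` makes it induced). With the girth this rules out paths on five
vertices, which forces all edges of `H` to meet a single edge of `H`. Hence `k` co-chordal subgraphs
covering `G` yield an edge dominating set of size at most `k`; an exchange argument turns it into a
maximal matching that is no larger, and well-coveredness of `L(G)` says that every maximal matching
has `m(G)` edges. Conversely, the edges meeting a single edge `pq` form a subgraph whose complement
is a clique plus the two non-adjacent vertices `p`, `q`, which is chordal, so a maximum matching
gives a cover by `m(G)` co-chordal subgraphs.
-/

namespace SimpleGraph

section Girth

variable {W : Type*} {K : SimpleGraph W}

open Fin.CommRing in
theorem cycleGraph_cliqueFree_three {n : ℕ} (hn : 4 ≤ n) : (cycleGraph n).CliqueFree 3 := by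
  obtain ⟨m, rfl⟩ := Nat.exists_eq_add_of_le' hn
  intro s hs
  obtain ⟨i, j, k, hij, hik, hjk, -⟩ := is3Clique_iff.mp hs
  have h1 : (1 : Fin (m + 4)) ≠ 0 := by simp
  have h3 : (3 : Fin (m + 4)) ≠ 0 := by simp [Fin.ext_iff, Nat.mod_eq_of_lt]
  rw [cycleGraph_adj] at hij hik hjk
  rcases hij with h | h <;> rcases hjk with h' | h' <;> rcases hik with h'' | h'' <;> grind

theorem egirth_le_three {a b c : W} (hab : K.Adj a b) (hbc : K.Adj b c) (hca : K.Adj c a) :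
    K.egirth ≤ 3 := by
  refine egirth_le_length (w := .cons hab (.cons hbc (.cons hca .nil))) ?_
  rw [Walk.cons_isCycle_iff]
  constructor
  · simp [Walk.cons_isPath_iff, hbc.ne, hca.ne, hab.ne']
  · simp [Walk.edges_cons, hab.ne, hbc.ne, hca.ne']

theorem egirth_le_four {a b c d : W} (hab : K.Adj a b) (hbc : K.Adj b c) (hcd : K.Adj c d)
    (hda : K.Adj d a) (hac : a ≠ c) (hbd : b ≠ d) : K.egirth ≤ 4 := by
  refine egirth_le_length (w := .cons hab (.cons hbc (.cons hcd (.cons hda .nil)))) ?_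
  rw [Walk.cons_isCycle_iff]
  constructor
  · simp [Walk.cons_isPath_iff, hbc.ne, hcd.ne, hda.ne, hac.symm, hbd, hab.ne']
  · simp [Walk.edges_cons, hab.ne, hbc.ne, hda.ne', hac, hbd]

theorem not_adj_of_four_le_egirth (hg : 4 ≤ K.egirth) {a b c : W} (hab : K.Adj a b)
    (hbc : K.Adj b c) : ¬K.Adj c a := fun hca => by
  have := hg.trans (egirth_le_three hab hbc hca)
  norm_num at this

theorem not_adj_of_five_le_egirth (hg : 5 ≤ K.egirth) {a b c d : W} (hab : K.Adj a b)
    (hbc : K.Adj b c) (hcd : K.Adj c d) (hac : a ≠ c) (hbd : b ≠ d) : ¬K.Adj d a := fun hda => by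
  have := hg.trans (egirth_le_four hab hbc hcd hda hac hbd)
  norm_num at this

end Girth

section Chordal

variable {W : Type*} {K : SimpleGraph W}

theorem cycleGraph_four_exists_adj_of_diagonals {P : Fin 4 → Prop} (h₀₂ : P 0 ∨ P 2)
    (h₁₃ : P 1 ∨ P 3) : ∃ a b, (cycleGraph 4).Adj a b ∧ P a ∧ P b := by
  rcases h₀₂ with h | h <;> rcases h₁₃ with h' | h'
  exacts [⟨0, 1, by decide, h, h'⟩, ⟨0, 3, by decide, h, h'⟩, ⟨2, 1, by decide, h, h'⟩,
    ⟨2, 3, by decide, h, h'⟩]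

theorem chordal_of_isClique_compl_pair {Γ : SimpleGraph W} {p q : W} (hpq : ¬Γ.Adj p q)
    (hclique : Γ.IsClique ({p, q} : Set W)ᶜ) : Chordal Γ := by
  classical
  intro n hn
  refine ⟨fun f => ?_⟩
  have hends : ∀ i j, i ≠ j → ¬(cycleGraph n).Adj i j →
      f i ∈ ({p, q} : Set W) ∨ f j ∈ ({p, q} : Set W) := by
    intro i j hij hnadj
    by_contra! h
    exact hnadj (f.map_adj_iff.mp (hclique h.1 h.2 (f.injective.ne hij)))
  -- At most two vertices of the cycle avoid `p` and `q` (they span a clique of the cycle) and at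
  -- most two do not, so `n = 4`.
  have hT : (Finset.univ.filter fun i => f i ∉ ({p, q} : Set W)).card ≤ 2 := by
    by_contra! h3
    obtain ⟨t, ht, htcard⟩ := Finset.exists_subset_card_eq h3
    refine cycleGraph_cliqueFree_three hn t ⟨fun i hi j hj hij => ?_, htcard⟩
    by_contra hnadj
    have hi' := (Finset.mem_filter.mp (ht hi)).2
    have hj' := (Finset.mem_filter.mp (ht hj)).2
    rcases hends i j hij hnadj with h | h <;> contradiction
  have hS : (Finset.univ.filter fun i => f i ∈ ({p, q} : Set W)).card ≤ 2 :=
    calc _ ≤ ({p, q} : Finset W).card :=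
          Finset.card_le_card_of_injOn f (fun i hi => by simpa using (Finset.mem_filter.mp hi).2)
            f.injective.injOn
      _ ≤ 2 := Finset.card_le_two
  have hcard := Finset.card_filter_add_card_filter_not (s := Finset.univ)
    (fun i => f i ∈ ({p, q} : Set W))
  rw [Finset.card_univ, Fintype.card_fin] at hcard
  obtain rfl : n = 4 := by omega
  obtain ⟨a, b, hab, hfa, hfb⟩ := cycleGraph_four_exists_adj_of_diagonals
    (P := fun i => f i ∈ ({p, q} : Set W)) (hends 0 2 (by decide) (by decide))
    (hends 1 3 (by decide) (by decide))
  replace hab := f.map_adj_iff.mpr hab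
  simp only [Set.mem_insert_iff, Set.mem_singleton_iff] at hfa hfb
  rcases hfa with h | h <;> rcases hfb with h' | h' <;> rw [h, h'] at hab
  exacts [hab.ne rfl, hpq hab, hpq hab.symm, hab.ne rfl]

theorem not_chordal_compl_of_injective {n : ℕ} (hn : 4 ≤ n) {f : Fin n → W}
    (hf : Function.Injective f)
    (hadj : ∀ i j, i ≠ j → (K.Adj (f i) (f j) ↔ ¬(cycleGraph n).Adj i j)) : ¬Chordal Kᶜ := by
  intro h
  refine (h n hn).false ⟨⟨f, hf⟩, fun {i j} => ?_⟩
  by_cases hij : i = j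
  · simp [hij]
  · simp [compl_adj, hf.ne hij, hadj i j hij]

theorem adj_or_adj_of_chordal_compl (hK : Chordal Kᶜ) {a b c d : W} (hab : K.Adj a b)
    (hcd : K.Adj c d) (hac : a ≠ c) (had : a ≠ d) (hbc : b ≠ c) (hbd : b ≠ d) :
    K.Adj a c ∨ K.Adj a d ∨ K.Adj b c ∨ K.Adj b d := by
  by_contra! hnot
  refine not_chordal_compl_of_injective le_rfl (f := ![a, c, b, d]) ?_ ?_ hK
  · intro i j
    fin_cases i <;> fin_cases j <;>
      simp [hab.ne, hcd.ne, hac, had, hbc, hbd, hab.ne', hcd.ne', hac.symm, had.symm, hbc.symm,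
        hbd.symm]
  · intro i j hij
    fin_cases i <;> fin_cases j <;> simp_all [cycleGraph_adj, adj_comm] <;> decide

theorem not_adj_of_chordal_compl (hK : Chordal Kᶜ) (hg : 5 ≤ K.egirth) {v₁ v₂ v₃ v₄ v₅ : W}
    (h₁₂ : K.Adj v₁ v₂) (h₂₃ : K.Adj v₂ v₃) (h₃₄ : K.Adj v₃ v₄) (h₄₅ : K.Adj v₄ v₅) :
    ¬K.Adj v₅ v₁ := by
  intro h₅₁
  have tri := @not_adj_of_four_le_egirth _ _ (le_trans (by norm_num) hg)
  have n₁₃ := tri h₁₂ h₂₃; have n₂₄ := tri h₂₃ h₃₄; have n₃₅ := tri h₃₄ h₄₅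
  have n₁₄ := tri h₄₅ h₅₁; have n₂₅ := tri h₅₁ h₁₂
  have d₁₃ : v₁ ≠ v₃ := fun h => tri h₃₄ h₄₅ (h ▸ h₅₁)
  have d₂₄ : v₂ ≠ v₄ := fun h => tri h₄₅ h₅₁ (h ▸ h₁₂)
  have d₃₅ : v₃ ≠ v₅ := fun h => tri h₁₂ h₂₃ (h ▸ h₅₁)
  have d₁₄ : v₁ ≠ v₄ := fun h => tri h₁₂ h₂₃ (h ▸ h₃₄)
  have d₂₅ : v₂ ≠ v₅ := fun h => tri h₂₃ h₃₄ (h ▸ h₄₅)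
  -- The complement of the pentagon `v₁ v₂ v₃ v₄ v₅` is the pentagon `v₁ v₃ v₅ v₂ v₄`.
  refine not_chordal_compl_of_injective (n := 5) (by norm_num) (f := ![v₁, v₃, v₅, v₂, v₄])
    ?_ ?_ hK
  · intro i j
    fin_cases i <;> fin_cases j <;>
      simp [h₁₂.ne, h₂₃.ne, h₃₄.ne, h₄₅.ne, h₅₁.ne, h₁₂.ne', h₂₃.ne', h₃₄.ne', h₄₅.ne', h₅₁.ne',
        d₁₃, d₂₄, d₃₅, d₁₄, d₂₅, d₁₃.symm, d₂₄.symm, d₃₅.symm, d₁₄.symm, d₂₅.symm]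
  · intro i j hij
    fin_cases i <;> fin_cases j <;> simp_all [cycleGraph_adj, adj_comm] <;> decide

end Chordal

section Pivot

variable {W : Type*} {K : SimpleGraph W} (hK : Chordal Kᶜ) (hg : 5 ≤ K.egirth)
include hK hg

theorem false_of_path_five {v₁ v₂ v₃ v₄ v₅ : W} (h₁₂ : K.Adj v₁ v₂) (h₂₃ : K.Adj v₂ v₃)
    (h₃₄ : K.Adj v₃ v₄) (h₄₅ : K.Adj v₄ v₅) (d₁₃ : v₁ ≠ v₃) (d₂₄ : v₂ ≠ v₄) (d₃₅ : v₃ ≠ v₅) :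
    False := by
  have tri := @not_adj_of_four_le_egirth _ _ (le_trans (by norm_num) hg)
  have sq := @not_adj_of_five_le_egirth _ _ hg
  have d₁₄ : v₁ ≠ v₄ := fun h => tri h₁₂ h₂₃ (h ▸ h₃₄)
  have d₂₅ : v₂ ≠ v₅ := fun h => tri h₂₃ h₃₄ (h ▸ h₄₅)
  have d₁₅ : v₁ ≠ v₅ := fun h => sq h₁₂ h₂₃ h₃₄ d₁₃ d₂₄ (h ▸ h₄₅)
  rcases adj_or_adj_of_chordal_compl hK h₁₂ h₄₅ d₁₄ d₁₅ d₂₄ d₂₅ with h | h | h | h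
  · exact sq h₁₂ h₂₃ h₃₄ d₁₃ d₂₄ h.symm
  · exact not_adj_of_chordal_compl hK hg h₁₂ h₂₃ h₃₄ h₄₅ h.symm
  · exact tri h₂₃ h₃₄ h.symm
  · exact sq h₂₃ h₃₄ h₄₅ d₂₄ d₃₅ h.symm

theorem eq_or_eq_of_adj_of_path_four {a b c d : W} (hab : K.Adj a b) (hbc : K.Adj b c)
    (hcd : K.Adj c d) (hac : a ≠ c) (hbd : b ≠ d) {u v : W} (huv : K.Adj u v) :
    u = b ∨ u = c ∨ v = b ∨ v = c := by
  by_contra! h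
  obtain ⟨hub, huc, hvb, hvc⟩ := h
  rcases adj_or_adj_of_chordal_compl hK huv hbc hub huc hvb hvc with h | h | h | h
  · exact false_of_path_five hK hg huv.symm h hbc hcd hvb huc hbd
  · exact false_of_path_five hK hg huv.symm h hbc.symm hab.symm hvc hub hac.symm
  · exact false_of_path_five hK hg huv h hbc hcd hub hvc hbd
  · exact false_of_path_five hK hg huv h hbc.symm hab.symm huc hvb hac.symm

theorem exists_adj_forall_adj_eq_or_eq {a b : W} (hab : K.Adj a b) :
    ∃ p q, K.Adj p q ∧ ∀ ⦃u v⦄, K.Adj u v → u = p ∨ u = q ∨ v = p ∨ v = q := by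
  by_cases hdisj : ∃ c d, K.Adj c d ∧ a ≠ c ∧ a ≠ d ∧ b ≠ c ∧ b ≠ d
  · obtain ⟨c, d, hcd, hac, had, hbc, hbd⟩ := hdisj
    have path := @eq_or_eq_of_adj_of_path_four _ _ hK hg
    rcases adj_or_adj_of_chordal_compl hK hab hcd hac had hbc hbd with h | h | h | h
    · exact ⟨a, c, h, fun _ _ => path hab.symm h hcd hbc had⟩
    · exact ⟨a, d, h, fun _ _ => path hab.symm h hcd.symm hbd hac⟩
    · exact ⟨b, c, h, fun _ _ => path hab h hcd hac hbd⟩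
    · exact ⟨b, d, h, fun _ _ => path hab h hcd.symm had hbc⟩
  · refine ⟨a, b, hab, fun u v huv => ?_⟩
    by_contra! h
    exact hdisj ⟨u, v, huv, h.1.symm, h.2.2.1.symm, h.2.1.symm, h.2.2.2.symm⟩

end Pivot

section Subgraph

variable {G : SimpleGraph V}

theorem Subgraph.exists_mem_edgeSet_forall_exists_mem (hg : 5 ≤ G.egirth) {H : G.Subgraph}
    (hH : Chordal H.coeᶜ) (hne : H.edgeSet.Nonempty) :
    ∃ e ∈ H.edgeSet, ∀ f ∈ H.edgeSet, ∃ x ∈ f, x ∈ e := by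
  obtain ⟨f, hf⟩ := hne
  induction f using Sym2.ind with | _ a b => ?_
  obtain ⟨p, q, hpq, hpivot⟩ := exists_adj_forall_adj_eq_or_eq hH
    (hg.trans H.coe_isContained.egirth_le) (a := ⟨a, H.edge_vert hf⟩)
    (b := ⟨b, H.edge_vert hf.symm⟩) hf
  refine ⟨s(p, q), hpq, fun f hf => ?_⟩
  induction f using Sym2.ind with | _ u v => ?_
  rcases hpivot (u := ⟨u, H.edge_vert hf⟩) (v := ⟨v, H.edge_vert hf.symm⟩) hf with
    h | h | h | h <;> rw [Subtype.ext_iff] at h <;> subst h <;> simp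

def doubleStar (G : SimpleGraph V) (e : Sym2 V) : G.Subgraph where
  verts := Set.univ
  Adj u v := G.Adj u v ∧ (u ∈ e ∨ v ∈ e)
  adj_sub h := h.1
  edge_vert _ := Set.mem_univ _
  symm := ⟨fun _ _ h => ⟨h.1.symm, h.2.symm⟩⟩

@[simp]
theorem doubleStar_adj {e : Sym2 V} {u v : V} :
    (G.doubleStar e).Adj u v ↔ G.Adj u v ∧ (u ∈ e ∨ v ∈ e) :=
  Iff.rfl

theorem chordal_compl_doubleStar {e : Sym2 V} (he : e ∈ G.edgeSet) :
    Chordal (G.doubleStar e).coeᶜ := by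
  induction e using Sym2.ind with | _ p q => ?_
  rw [mem_edgeSet] at he
  refine chordal_of_isClique_compl_pair (p := ⟨p, Set.mem_univ p⟩)
    (q := ⟨q, Set.mem_univ q⟩) ?_ ?_
  · simp [compl_adj, he]
  · intro u hu v hv huv
    simp only [Set.mem_compl_iff, Set.mem_insert_iff, Set.mem_singleton_iff, Subtype.ext_iff]
      at hu hv
    simp [compl_adj, huv, hu, hv]

end Subgraph

end SimpleGraph

section Matchings

variable {G : SimpleGraph V}

def IsEdgeDominating (G : SimpleGraph V) (D : Finset (Sym2 V)) : Prop :=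
  ∀ e ∈ G.edgeSet, ∃ f ∈ D, ∃ x ∈ e, x ∈ f

theorem IsMatchingSet.maxIndep_lineGraph {M : Finset (Sym2 V)} (hM : IsMatchingSet G M)
    (hMdom : IsEdgeDominating G M) : MaxIndep G.lineGraph {e : G.edgeSet | ↑e ∈ M} := by
  refine ⟨fun e he f hf hef => ?_, fun T hT hMT => (hMT.antisymm fun e he => ?_)⟩
  · obtain ⟨hne, x, hxe, hxf⟩ := lineGraph_adj_iff_exists.mp hef
    exact hM.2 e he f hf (Subtype.coe_injective.ne hne) x hxe hxf
  · obtain ⟨f, hf, x, hxe, hxf⟩ := hMdom e e.2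
    have hfT : (⟨f, hM.1 f hf⟩ : G.edgeSet) ∈ T := hMT hf
    by_contra heM
    have hef : e ≠ ⟨f, hM.1 f hf⟩ := fun h => heM (h ▸ hf)
    exact hT he hfT (lineGraph_adj_iff_exists.mpr ⟨hef, x, hxe, hxf⟩)

theorem ncard_setOf_coe_mem {M : Finset (Sym2 V)} (hM : ∀ e ∈ M, e ∈ G.edgeSet) :
    {e : G.edgeSet | ↑e ∈ M}.ncard = M.card :=
  (Set.ncard_preimage_of_injective_subset_range Subtype.coe_injective
    fun e he => ⟨⟨e, hM e he⟩, rfl⟩).trans (Set.ncard_coe_finset M)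

theorem WellCovered.card_eq_of_isMatchingSet (hwc : WellCovered G.lineGraph)
    {M N : Finset (Sym2 V)} (hM : IsMatchingSet G M) (hMdom : IsEdgeDominating G M)
    (hN : IsMatchingSet G N) (hNdom : IsEdgeDominating G N) : M.card = N.card := by
  rw [← ncard_setOf_coe_mem hM.1, ← ncard_setOf_coe_mem hN.1]
  exact hwc _ _ (hM.maxIndep_lineGraph hMdom) (hN.maxIndep_lineGraph hNdom)

theorem IsMatchingSet.insert [DecidableEq V] {M : Finset (Sym2 V)} (hM : IsMatchingSet G M)
    {e : Sym2 V} (he : e ∈ G.edgeSet) (hdisj : ∀ f ∈ M, ∀ x ∈ e, x ∉ f) :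
    IsMatchingSet G (insert e M) := by
  refine ⟨by simpa [he] using hM.1, fun f hf g hg hfg x hxf => ?_⟩
  rcases Finset.mem_insert.mp hf with rfl | hfM <;> rcases Finset.mem_insert.mp hg with rfl | hgM
  · exact absurd rfl hfg
  · exact hdisj g hgM x hxf
  · exact fun hxg => hdisj f hfM x hxg hxf
  · exact hM.2 f hfM g hgM hfg x hxf

variable [Fintype V]

theorem bddAbove_matchingCards (G : SimpleGraph V) :
    BddAbove {n | ∃ M : Finset (Sym2 V), IsMatchingSet G M ∧ M.card = n} :=
  ⟨Fintype.card (Sym2 V), fun _ ⟨M, _, hM⟩ => hM ▸ M.card_le_univ⟩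

theorem IsMatchingSet.card_le_matchNum {M : Finset (Sym2 V)} (hM : IsMatchingSet G M) :
    M.card ≤ matchNum G :=
  le_csSup (bddAbove_matchingCards G) ⟨M, hM, rfl⟩

theorem exists_isMatchingSet_card_eq_matchNum (G : SimpleGraph V) :
    ∃ M, IsMatchingSet G M ∧ M.card = matchNum G :=
  Nat.sSup_mem (s := {n | ∃ M, IsMatchingSet G M ∧ M.card = n}) ⟨0, ∅, ⟨by simp, by simp⟩, rfl⟩
    (bddAbove_matchingCards G)

theorem IsMatchingSet.isEdgeDominating_of_card_eq {M : Finset (Sym2 V)} (hM : IsMatchingSet G M)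
    (hcard : M.card = matchNum G) : IsEdgeDominating G M := by
  classical
  intro e he
  by_contra! hdisj
  have heM : e ∉ M := fun heM => by
    induction e using Sym2.ind with | _ a b => exact hdisj _ heM a (by simp) (by simp)
  have := (hM.insert he hdisj).card_le_matchNum
  rw [Finset.card_insert_of_notMem heM] at this
  omega

end Matchings

section Exchange

variable {G : SimpleGraph V}

def coveredVerts (D : Finset (Sym2 V)) : Set V := {v | ∃ e ∈ D, v ∈ e}

/-- The exchange argument lowers this until `D` is a matching. -/
noncomputable def overlap (D : Finset (Sym2 V)) : ℤ := 2 * D.card - (coveredVerts D).ncard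

variable [DecidableEq V]

theorem IsEdgeDominating.of_erase_subset {D D' : Finset (Sym2 V)} {f : Sym2 V}
    (hD : IsEdgeDominating G D) (hsub : D.erase f ⊆ D')
    (hf : ∀ e ∈ G.edgeSet, (∃ x ∈ e, x ∈ f) → ∃ g ∈ D', ∃ x ∈ e, x ∈ g) :
    IsEdgeDominating G D' := by
  intro e he
  obtain ⟨g, hg, hmeet⟩ := hD e he
  by_cases hgf : g = f
  · exact hf e he (hgf ▸ hmeet)
  · exact ⟨g, hsub (Finset.mem_erase.mpr ⟨hgf, hg⟩), hmeet⟩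

theorem coveredVerts_subset_insert {D : Finset (Sym2 V)} {e : Sym2 V} {x w : V}
    (he : e ∈ D.erase s(x, w)) (hxe : x ∈ e) :
    coveredVerts D ⊆ insert w (coveredVerts (D.erase s(x, w))) := by
  rintro v ⟨f, hf, hvf⟩
  by_cases hfxw : f = s(x, w)
  · subst hfxw
    rcases Sym2.mem_iff.mp hvf with rfl | rfl
    · exact Or.inr ⟨e, he, hxe⟩
    · exact Or.inl rfl
  · exact Or.inr ⟨f, Finset.mem_erase.mpr ⟨hfxw, hf⟩, hvf⟩

theorem coveredVerts_ssubset_insert_erase {D : Finset (Sym2 V)} {e : Sym2 V} {x w y : V}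
    (he : e ∈ D.erase s(x, w)) (hxe : x ∈ e) (hwy : w ≠ y)
    (hdisj : ∀ h ∈ D.erase s(x, w), ∀ z ∈ s(w, y), z ∉ h) :
    coveredVerts D ⊂ coveredVerts (insert s(w, y) (D.erase s(x, w))) := by
  have hy : y ∉ coveredVerts D := by
    rintro ⟨h, hh, hyh⟩
    by_cases hhf : h = s(x, w)
    · subst hhf
      rcases Sym2.mem_iff.mp hyh with h | h <;> subst h
      exacts [hdisj e he y (Sym2.mem_mk_right _ _) hxe, hwy rfl]
    · exact hdisj h (Finset.mem_erase.mpr ⟨hhf, hh⟩) y (Sym2.mem_mk_right _ _) hyh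
  refine (Set.ssubset_iff_of_subset ?_).mpr
    ⟨y, ⟨_, Finset.mem_insert_self _ _, Sym2.mem_mk_right _ _⟩, hy⟩
  refine (coveredVerts_subset_insert he hxe).trans
    (Set.insert_subset ⟨_, Finset.mem_insert_self _ _, Sym2.mem_mk_left _ _⟩ ?_)
  rintro v ⟨h, hh, hvh⟩
  exact ⟨h, Finset.mem_insert_of_mem hh, hvh⟩

/-- If `e` and `f = xw` in `D` share `x`, either `f` can be dropped (when the edges at `w` stay
dominated) or it can be traded for an edge `wy` meeting no other edge of `D`, which covers the new
vertex `y`. -/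
theorem IsEdgeDominating.exists_overlap_lt [Finite V] {D : Finset (Sym2 V)}
    (hDG : ∀ e ∈ D, e ∈ G.edgeSet) (hD : IsEdgeDominating G D) {e : Sym2 V} {x w : V}
    (he : e ∈ D) (hf : s(x, w) ∈ D) (hef : e ≠ s(x, w)) (hxe : x ∈ e) :
    ∃ D', (∀ e ∈ D', e ∈ G.edgeSet) ∧ IsEdgeDominating G D' ∧ D'.card ≤ D.card ∧
      overlap D' < overlap D := by
  set D₀ := D.erase s(x, w)
  have heD₀ : e ∈ D₀ := Finset.mem_erase.mpr ⟨hef, he⟩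
  have hcov : coveredVerts D ⊆ insert w (coveredVerts D₀) := coveredVerts_subset_insert heD₀ hxe
  have hcard : D₀.card + 1 = D.card := Finset.card_erase_add_one hf
  have hD₀G : ∀ g ∈ D₀, g ∈ G.edgeSet := fun g hg => hDG g (Finset.mem_of_mem_erase hg)
  by_cases hw : ∀ g ∈ G.edgeSet, w ∈ g → ∃ h ∈ D₀, ∃ y ∈ g, y ∈ h
  · refine ⟨D₀, hD₀G, hD.of_erase_subset subset_rfl ?_, by omega, ?_⟩
    · rintro g hg ⟨y, hyg, hyf⟩
      rcases Sym2.mem_iff.mp hyf with rfl | rfl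
      exacts [⟨e, heD₀, y, hyg, hxe⟩, hw g hg hyg]
    · have := (Set.ncard_le_ncard hcov).trans (Set.ncard_insert_le w _)
      simp only [overlap, ← hcard]
      push_cast
      omega
  · push Not at hw
    obtain ⟨g, hg, hwg, hgD₀⟩ := hw
    obtain ⟨y, rfl⟩ := Sym2.mem_iff_exists.mp hwg
    have hgD₀' : s(w, y) ∉ D₀ := fun h => hgD₀ _ h w hwg hwg
    have hsub : coveredVerts D ⊂ coveredVerts (insert s(w, y) D₀) :=
      coveredVerts_ssubset_insert_erase heD₀ hxe hg.ne hgD₀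
    refine ⟨insert s(w, y) D₀, ?_, hD.of_erase_subset (Finset.subset_insert _ _) ?_, ?_, ?_⟩
    · simpa [hg] using hD₀G
    · rintro g' hg' ⟨z, hzg', hzf⟩
      rcases Sym2.mem_iff.mp hzf with rfl | rfl
      · exact ⟨e, Finset.mem_insert_of_mem heD₀, z, hzg', hxe⟩
      · exact ⟨s(z, y), Finset.mem_insert_self _ _, z, hzg', Sym2.mem_mk_left _ _⟩
    · rw [Finset.card_insert_of_notMem hgD₀']
      omega
    · have := Set.ncard_lt_ncard hsub
      simp only [overlap, Finset.card_insert_of_notMem hgD₀', ← hcard]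
      push_cast
      omega

end Exchange

theorem IsEdgeDominating.exists_isMatchingSet_card_le [Fintype V] {G : SimpleGraph V}
    {D : Finset (Sym2 V)} (hDG : ∀ e ∈ D, e ∈ G.edgeSet) (hD : IsEdgeDominating G D) :
    ∃ M, IsMatchingSet G M ∧ IsEdgeDominating G M ∧ M.card ≤ D.card := by
  classical
  obtain ⟨M, hM, hmin⟩ := (Finset.univ.filter fun D' : Finset (Sym2 V) =>
    (∀ e ∈ D', e ∈ G.edgeSet) ∧ IsEdgeDominating G D' ∧ D'.card ≤ D.card).exists_min_image
    overlap ⟨D, Finset.mem_filter.mpr ⟨Finset.mem_univ _, hDG, hD, le_rfl⟩⟩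
  simp only [Finset.mem_filter, Finset.mem_univ, true_and] at hM hmin
  obtain ⟨hMG, hMdom, hMcard⟩ := hM
  refine ⟨M, ⟨hMG, fun e he f hf hef x hxe hxf => ?_⟩, hMdom, hMcard⟩
  obtain ⟨w, rfl⟩ := Sym2.mem_iff_exists.mp hxf
  obtain ⟨D', hD'G, hD'dom, hD'card, hlt⟩ := hMdom.exists_overlap_lt hMG he hf hef hxe
  exact (hmin D' ⟨hD'G, hD'dom, hD'card.trans hMcard⟩).not_gt hlt

section CochordalCovers

variable {G : SimpleGraph V}

theorem exists_cochordal_cover_of_isEdgeDominating {D : Finset (Sym2 V)}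
    (hDG : ∀ e ∈ D, e ∈ G.edgeSet) (hD : IsEdgeDominating G D) :
    ∃ H : Fin D.card → G.Subgraph, (∀ i, Chordal (H i).coeᶜ) ∧
      ∀ e ∈ G.edgeSet, ∃ i, e ∈ (H i).edgeSet := by
  refine ⟨fun i => G.doubleStar (D.equivFin.symm i),
    fun i => chordal_compl_doubleStar (hDG _ (D.equivFin.symm i).2), fun e he => ?_⟩
  obtain ⟨f, hf, x, hxe, hxf⟩ := hD e he
  refine ⟨D.equivFin ⟨f, hf⟩, ?_⟩
  dsimp only
  rw [Equiv.symm_apply_apply]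
  induction e using Sym2.ind with | _ u v => ?_
  rw [Subgraph.mem_edgeSet, doubleStar_adj]
  refine ⟨he, ?_⟩
  rcases Sym2.mem_iff.mp hxe with rfl | rfl
  exacts [Or.inl hxf, Or.inr hxf]

theorem exists_isEdgeDominating_of_cochordal_cover (hne : G.edgeSet.Nonempty)
    (hg : 5 ≤ G.egirth) {k : ℕ} (H : Fin k → G.Subgraph) (hH : ∀ i, Chordal (H i).coeᶜ)
    (hcov : ∀ e ∈ G.edgeSet, ∃ i, e ∈ (H i).edgeSet) :
    ∃ D : Finset (Sym2 V), (∀ e ∈ D, e ∈ G.edgeSet) ∧ IsEdgeDominating G D ∧ D.card ≤ k := by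
  classical
  have hpivot : ∀ i, ∃ e ∈ G.edgeSet, ∀ f ∈ (H i).edgeSet, ∃ x ∈ f, x ∈ e := by
    intro i
    rcases (H i).edgeSet.eq_empty_or_nonempty with h | h
    · exact ⟨hne.some, hne.some_mem, by simp [h]⟩
    · obtain ⟨e, he, hdom⟩ := Subgraph.exists_mem_edgeSet_forall_exists_mem hg (hH i) h
      exact ⟨e, (H i).edgeSet_subset he, hdom⟩
  choose g hgG hgdom using hpivot
  refine ⟨Finset.univ.image g, by simpa using hgG, fun e he => ?_,
    Finset.card_image_le.trans (by simp)⟩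
  obtain ⟨i, hi⟩ := hcov e he
  exact ⟨g i, Finset.mem_image_of_mem g (Finset.mem_univ i), hgdom i e hi⟩

variable [Fintype V]

theorem matchNum_le_of_cochordal_cover (hne : G.edgeSet.Nonempty) (hg : 5 ≤ G.egirth)
    (hwc : WellCovered G.lineGraph) {k : ℕ} (H : Fin k → G.Subgraph)
    (hH : ∀ i, Chordal (H i).coeᶜ) (hcov : ∀ e ∈ G.edgeSet, ∃ i, e ∈ (H i).edgeSet) :
    matchNum G ≤ k := by
  obtain ⟨D, hDG, hD, hDcard⟩ := exists_isEdgeDominating_of_cochordal_cover hne hg H hH hcov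
  obtain ⟨M, hM, hMdom, hMcard⟩ := hD.exists_isMatchingSet_card_le hDG
  obtain ⟨N, hN, hNcard⟩ := exists_isMatchingSet_card_eq_matchNum G
  calc matchNum G = M.card :=
        hNcard ▸ hwc.card_eq_of_isMatchingSet hN (hN.isEdgeDominating_of_card_eq hNcard) hM hMdom
    _ ≤ k := hMcard.trans hDcard

theorem exists_cochordal_cover_cochord (G : SimpleGraph V) :
    ∃ H : Fin (cochord G) → G.Subgraph, (∀ i, Chordal (H i).coeᶜ) ∧
      ∀ e ∈ G.edgeSet, ∃ i, e ∈ (H i).edgeSet := by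
  obtain ⟨M, hM, hMcard⟩ := exists_isMatchingSet_card_eq_matchNum G
  exact Nat.sInf_mem (s := {k | ∃ H : Fin k → G.Subgraph, (∀ i, Chordal (H i).coeᶜ) ∧
      ∀ e ∈ G.edgeSet, ∃ i, e ∈ (H i).edgeSet})
    ⟨_, exists_cochordal_cover_of_isEdgeDominating hM.1 (hM.isEdgeDominating_of_card_eq hMcard)⟩

theorem cochord_le_matchNum (G : SimpleGraph V) : cochord G ≤ matchNum G := by
  obtain ⟨M, hM, hMcard⟩ := exists_isMatchingSet_card_eq_matchNum G
  exact hMcard ▸ Nat.sInf_le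
    (exists_cochordal_cover_of_isEdgeDominating hM.1 (hM.isEdgeDominating_of_card_eq hMcard))

end CochordalCovers

theorem cochord_eq_matchNum_general [Fintype V] (G : SimpleGraph V)
    (hne : G.edgeSet.Nonempty) (hg : 5 ≤ G.egirth)
    (hwc : WellCovered G.lineGraph) : cochord G = matchNum G := by
  obtain ⟨H, hH, hcov⟩ := exists_cochordal_cover_cochord G
  exact (cochord_le_matchNum G).antisymm (matchNum_le_of_cochordal_cover hne hg hwc H hH hcov)

/-- for a connected graph of girth at least `5` whose line graph is
well-covered, `cochord(G) = m(G)`. -/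
theorem cochord_eq_matchNum [Fintype V] (G : SimpleGraph V)
    (hconn : G.Connected) (hne : G.edgeSet.Nonempty) (hg : 5 ≤ G.egirth)
    (hwc : WellCovered G.lineGraph) : cochord G = matchNum G :=
  cochord_eq_matchNum_general G hne hg hwc
end

section
/- If D is an acyclic digraph, then its common-enemy graph CE(D) is codismantlable. Moreover, every vertex of D with out-degree zero and positive in-degree is a codominated vertex of CE(D). -/
open SimpleGraph

variable {V : Type*}

/-- The common-enemy graph of a digraph `D`: `x ~ y` iff `x ≠ y` and some vertex
has a directed path to both. -/
def commonEnemy (D : V → V → Prop) : SimpleGraph V :=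
  SimpleGraph.fromRel
    (fun x y => ∃ z, Relation.ReflTransGen D z x ∧ Relation.ReflTransGen D z y)

lemma commonEnemy_adj_iff (D : V → V → Prop) {u v : V} :
    (commonEnemy D).Adj u v ↔ u ≠ v ∧
      ∃ z, Relation.ReflTransGen D z u ∧ Relation.ReflTransGen D z v := by
  constructor
  · rintro ⟨hne, (⟨z, h1, h2⟩ | ⟨z, h1, h2⟩)⟩
    · exact ⟨hne, z, h1, h2⟩
    · exact ⟨hne, z, h2, h1⟩
  · rintro ⟨hne, z, h1, h2⟩
    exact ⟨hne, Or.inl ⟨z, h1, h2⟩⟩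

lemma commonEnemy_main [DecidableEq V] [Fintype V]
    (D : V → V → Prop) (hacyc : ∀ x : V, ¬ Relation.TransGen D x x) :
    ∀ A : Finset V, (∀ z u : V, u ∈ A → Relation.ReflTransGen D z u → z ∈ A) →
      CodismantlableOn (commonEnemy D) A := by
  have htg : ∀ {a b : V}, Relation.ReflTransGen D a b → a ≠ b →
      Relation.TransGen D a b := by
    intro a b h hne
    rcases (Relation.reflTransGen_iff_eq_or_transGen.mp h) with h | h
    · exact absurd h.symm hne
    · exact h
  intro A
  induction A using Finset.strongInduction with
  | _ A IH =>
    intro hclosed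
    rw [CodismantlableOn]
    set P : Set V := {x | x ∈ A ∧ ∃ y, y ∈ A ∧ y ≠ x ∧ Relation.ReflTransGen D y x}
      with hP
    by_cases hB : P.Nonempty
    · -- find a maximal element of P w.r.t. reachability
      haveI : IsTrans V (fun a b => Relation.TransGen D b a) :=
        ⟨fun a b c h1 h2 => h2.trans h1⟩
      haveI : IsIrrefl V (fun a b => Relation.TransGen D b a) := ⟨fun a h => hacyc a h⟩
      obtain ⟨x, hxP, hmax⟩ :=
        (Finite.wellFounded_of_trans_of_irrefl
          (fun a b : V => Relation.TransGen D b a)).has_min P hB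
      obtain ⟨hxA, y, hyA, hyne, hyx⟩ := hxP
      -- last edge of the path from y to x
      obtain ⟨y', hy'path, hy'x⟩ : ∃ y', Relation.ReflTransGen D y y' ∧ D y' x := by
        rcases hyx.cases_tail with h | ⟨c, hc1, hc2⟩
        · exact absurd h.symm hyne
        · exact ⟨c, hc1, hc2⟩
      have hy'A : y' ∈ A := hclosed y' x hxA (Relation.ReflTransGen.single hy'x)
      have hy'ne : y' ≠ x := by
        intro h; exact hacyc x (Relation.TransGen.single (h ▸ hy'x))
      refine Or.inr ⟨x, hxA, ⟨y', hy'A, hy'ne, ?_⟩, ?_⟩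
      · -- codomination
        intro z hzA hz
        rcases hz with rfl | hadj
        · right
          exact (commonEnemy_adj_iff D).mpr
            ⟨(Ne.symm hy'ne), z, Relation.ReflTransGen.single hy'x,
              Relation.ReflTransGen.refl⟩
        · by_cases hzx : z = x
          · exact Or.inl hzx
          · right
            obtain ⟨hne, t, ht1, ht2⟩ := (commonEnemy_adj_iff D).mp hadj
            exact (commonEnemy_adj_iff D).mpr ⟨Ne.symm hzx, t, ht1.tail hy'x, ht2⟩
      · -- recurse on A.erase x
        refine IH (A.erase x) (Finset.erase_ssubset hxA) ?_
        intro z u huE hzu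
        rcases Finset.mem_erase.mp huE with ⟨hune, huA⟩
        have hzA : z ∈ A := hclosed z u huA hzu
        refine Finset.mem_erase.mpr ⟨?_, hzA⟩
        rintro rfl
        -- then z = x reaches u ≠ x, contradicting maximality of x in P
        have hPu : u ∈ P := by
          obtain ⟨p, hp1, hp2⟩ : ∃ p, Relation.ReflTransGen D z p ∧ D p u := by
            rcases hzu.cases_tail with h | ⟨c, hc1, hc2⟩
            · exact absurd h.symm (Ne.symm hune)
            · exact ⟨c, hc1, hc2⟩
          have hpA : p ∈ A := hclosed p u huA (Relation.ReflTransGen.single hp2)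
          have hpne : p ≠ u := by
            intro h; exact hacyc u (Relation.TransGen.single (h ▸ hp2))
          exact ⟨huA, p, hpA, hpne, Relation.ReflTransGen.single hp2⟩
        exact hmax u hPu (htg hzu (Ne.symm hune))
    · -- no edges
      left
      intro u huA v hvA hadj
      obtain ⟨hne, t, ht1, ht2⟩ := (commonEnemy_adj_iff D).mp hadj
      have htA : t ∈ A := hclosed t u huA ht1
      rcases ne_or_eq t u with h | rfl
      · exact hB ⟨u, huA, t, htA, h, ht1⟩
      · exact hB ⟨v, hvA, t, htA, hne, ht2⟩

/-- the common-enemy graph of an acyclic digraph is codismantlable,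
and every vertex of out-degree zero and positive in-degree is codominated in it. -/
theorem commonEnemy_codismantlable [Fintype V] [DecidableEq V]
    (D : V → V → Prop) (hacyc : ∀ x : V, ¬ Relation.TransGen D x x) :
    Codismantlable (commonEnemy D) ∧
      ∀ x : V, (∀ y : V, ¬ D x y) → (∃ y : V, D y x) →
        Codominated (commonEnemy D) x := by
  constructor
  · exact commonEnemy_main D hacyc Finset.univ (fun _ _ _ _ => Finset.mem_univ _)
  · intro x _ ⟨y, hyx⟩
    have hyne : y ≠ x := by
      intro h; exact hacyc x (Relation.TransGen.single (h ▸ hyx))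
    refine ⟨y, hyne, ?_⟩
    intro w hw
    rcases hw with rfl | hwn
    · -- w = y : show y ∈ closedNbhd x
      exact Or.inr ((commonEnemy_adj_iff D).mpr
        ⟨Ne.symm hyne, w, Relation.ReflTransGen.single hyx, Relation.ReflTransGen.refl⟩)
    · obtain ⟨hne, t, ht1, ht2⟩ := (commonEnemy_adj_iff D).mp hwn
      by_cases hwx : w = x
      · exact Or.inl hwx
      · exact Or.inr ((commonEnemy_adj_iff D).mpr ⟨Ne.symm hwx, t, ht1.tail hyx, ht2⟩)
end

section
/- For any edge-clique partition Π of a finite simple graph G, the clique-whisker G^Π is codismantlable. -/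
open SimpleGraph

variable {V : Type*}

/-- The clique-whisker of `G` with respect to a family of cliques `W`:
add a new cone vertex for each clique, joined to all of its vertices. -/
def cliqueWhisker (G : SimpleGraph V) {k : ℕ} (W : Fin k → Set V) :
    SimpleGraph (V ⊕ Fin k) :=
  SimpleGraph.fromRel
    (fun a b => (∃ p q : V, a = Sum.inl p ∧ b = Sum.inl q ∧ G.Adj p q) ∨
      (∃ (p : V) (i : Fin k), a = Sum.inl p ∧ b = Sum.inr i ∧ p ∈ W i))


lemma cw_adj_inl_inl (G : SimpleGraph V) {k : ℕ} (W : Fin k → Set V) {p q : V} :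
    (cliqueWhisker G W).Adj (Sum.inl p) (Sum.inl q) ↔ G.Adj p q := by
  constructor
  · rintro ⟨hne, h | h⟩ <;>
      rcases h with ⟨a, b, ha, hb, hab⟩ | ⟨a, i, ha, hb, _⟩ <;> simp_all
    · exact hab.symm
  · intro h
    exact ⟨by simpa using h.ne, Or.inl (Or.inl ⟨p, q, rfl, rfl, h⟩)⟩

lemma cw_adj_inl_inr (G : SimpleGraph V) {k : ℕ} (W : Fin k → Set V) {p : V} {i : Fin k} :
    (cliqueWhisker G W).Adj (Sum.inl p) (Sum.inr i) ↔ p ∈ W i := by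
  constructor
  · rintro ⟨hne, h | h⟩ <;>
      rcases h with ⟨a, b, ha, hb, hab⟩ | ⟨a, j, ha, hb, hm⟩ <;> simp_all
  · intro h
    exact ⟨by simp, Or.inl (Or.inr ⟨p, i, rfl, rfl, h⟩)⟩

lemma cw_not_adj_inr_inr (G : SimpleGraph V) {k : ℕ} (W : Fin k → Set V) {i j : Fin k} :
    ¬ (cliqueWhisker G W).Adj (Sum.inr i) (Sum.inr j) := by
  rintro ⟨hne, h | h⟩ <;>
    rcases h with ⟨a, b, ha, hb, hab⟩ | ⟨a, j', ha, hb, hm⟩ <;> simp_all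

lemma cw_aux [DecidableEq V] (G : SimpleGraph V) {k : ℕ} (W : Fin k → Set V)
    (hclique : ∀ i, G.IsClique (W i))
    (hpart : ∀ u v : V, G.Adj u v → ∃! i, u ∈ W i ∧ v ∈ W i) :
    ∀ A : Finset (V ⊕ Fin k), (∀ i, Sum.inr i ∈ A) →
      CodismantlableOn (cliqueWhisker G W) A := by
  intro A
  induction A using Finset.strongInduction with
  | _ A ih =>
    intro hinr
    by_cases h : ∃ u : V, Sum.inl u ∈ A ∧ ∃ i : Fin k, u ∈ W i
    · obtain ⟨u, hu, i, hui⟩ := h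
      rw [CodismantlableOn]
      right
      refine ⟨Sum.inl u, hu, ⟨Sum.inr i, hinr i, by simp, ?_⟩, ?_⟩
      · intro z hz hadj
        rcases hadj with rfl | hadj
        · exact Or.inr ((cw_adj_inl_inr G W).mpr hui)
        · match z with
          | Sum.inr j => exact absurd hadj.symm (cw_not_adj_inr_inr G W)
          | Sum.inl p =>
            have hp : p ∈ W i := (cw_adj_inl_inr G W).mp hadj.symm
            by_cases hpu : p = u
            · exact Or.inl (by rw [hpu])
            · exact Or.inr ((cw_adj_inl_inl G W).mpr
                (hclique i hui hp (fun hh => hpu hh.symm)))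
      · exact ih _ (Finset.erase_ssubset hu)
          (fun j => Finset.mem_erase.mpr ⟨by simp, hinr j⟩)
    · rw [CodismantlableOn]
      left
      push_neg at h
      intro x hx y hy hadj
      match x, y with
      | Sum.inr i, Sum.inr j => exact cw_not_adj_inr_inr G W hadj
      | Sum.inl p, Sum.inr j => exact h p hx j ((cw_adj_inl_inr G W).mp hadj)
      | Sum.inr i, Sum.inl q => exact h q hy i ((cw_adj_inl_inr G W).mp hadj.symm)
      | Sum.inl p, Sum.inl q =>
        have hpq := (cw_adj_inl_inl G W).mp hadj
        obtain ⟨i, ⟨hpi, _⟩, _⟩ := hpart p q hpq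
        exact h p hx i hpi

/-- for any edge-clique partition `Π` of `G`, the clique-whisker
`G^Π` is codismantlable. -/
theorem cliqueWhisker_codismantlable [Fintype V] [DecidableEq V]
    (G : SimpleGraph V) (k : ℕ) (W : Fin k → Set V)
    (hclique : ∀ i, G.IsClique (W i))
    (hpart : ∀ u v : V, G.Adj u v → ∃! i, u ∈ W i ∧ v ∈ W i)
    (hsize : ∀ i, 2 ≤ (W i).ncard ∨ ∃ x, W i = {x} ∧ ∀ y, ¬ G.Adj x y) :
    Codismantlable (cliqueWhisker G W) :=
  cw_aux G W hclique hpart Finset.univ (fun i => Finset.mem_univ _)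
end

section
/- The cycle C_n is not vertex decomposable (equivalently, has no codominated vertex) for n ≥ 6. -/
open SimpleGraph

variable {V : Type*}

open Fin.NatCast Fin.CommRing

lemma mem_closedNbhd_iff {G : SimpleGraph V} {x y : V} :
    y ∈ closedNbhd G x ↔ y = x ∨ G.Adj x y :=
  Iff.rfl

lemma isIndep_pair_iff {G : SimpleGraph V} {a b : V} : IsIndep G {a, b} ↔ ¬ G.Adj a b := by
  refine ⟨fun h => h (Set.mem_insert a _) (Set.mem_insert_of_mem a rfl), fun hab => ?_⟩
  rintro u (rfl | rfl) w (rfl | rfl)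
  exacts [G.loopless.irrefl _, hab, fun h => hab h.symm, G.loopless.irrefl _]

lemma not_vertexDecomposableOn_of_forall_not_sheddingOn [DecidableEq V] {G : SimpleGraph V}
    {A : Finset V} {a b : V} (ha : a ∈ A) (hb : b ∈ A) (hab : G.Adj a b)
    (h : ∀ x ∈ A, ¬ SheddingOn G A x) : ¬ VertexDecomposableOn G A := by
  rw [VertexDecomposableOn]
  rintro (hA | ⟨x, hx, hshed, -, -⟩)
  exacts [hA a ha b hb hab, h x hx hshed]

lemma Fin.natCast_ne_zero_of_lt {n : ℕ} [NeZero n] (k : ℕ) (hk : 0 < k) (hkn : k < n) :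
    (k : Fin n) ≠ 0 := by
  simpa using Nat.not_dvd_of_pos_of_lt hk hkn

section cycleGraph

variable {n : ℕ} [NeZero n] {x y : Fin n}

lemma cycleGraph_adj_iff (hn : 2 ≤ n) :
    (cycleGraph n).Adj x y ↔ y = x - 1 ∨ y = x + 1 := by
  obtain ⟨m, rfl⟩ := Nat.exists_eq_add_of_le' hn
  rw [← mem_neighborSet, cycleGraph_neighborSet]
  rfl

lemma cycleGraph_add_two_not_mem_closedNbhd (hn : 4 ≤ n) :
    x + 2 ∉ closedNbhd (cycleGraph n) x := by
  rw [mem_closedNbhd_iff, cycleGraph_adj_iff (by omega)]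
  rintro (h | h | h)
  · exact Fin.natCast_ne_zero_of_lt (n := n) 2 (by omega) (by omega) (by linear_combination h)
  · exact Fin.natCast_ne_zero_of_lt (n := n) 3 (by omega) (by omega) (by linear_combination h)
  · exact Fin.natCast_ne_zero_of_lt (n := n) 1 (by omega) (by omega) (by linear_combination h)

lemma cycleGraph_sub_two_not_mem_closedNbhd (hn : 4 ≤ n) :
    x - 2 ∉ closedNbhd (cycleGraph n) x := by
  rw [mem_closedNbhd_iff, cycleGraph_adj_iff (by omega)]
  rintro (h | h | h)
  · exact Fin.natCast_ne_zero_of_lt (n := n) 2 (by omega) (by omega) (by linear_combination -h)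
  · exact Fin.natCast_ne_zero_of_lt (n := n) 1 (by omega) (by omega) (by linear_combination -h)
  · exact Fin.natCast_ne_zero_of_lt (n := n) 3 (by omega) (by omega) (by linear_combination -h)

lemma cycleGraph_not_adj_add_two_sub_two (hn : 6 ≤ n) :
    ¬ (cycleGraph n).Adj (x + 2) (x - 2) := by
  rw [cycleGraph_adj_iff (by omega)]
  rintro (h | h)
  · exact Fin.natCast_ne_zero_of_lt (n := n) 3 (by omega) (by omega) (by linear_combination -h)
  · exact Fin.natCast_ne_zero_of_lt (n := n) 5 (by omega) (by omega) (by linear_combination -h)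

lemma cycleGraph_not_codominated (hn : 4 ≤ n) (x : Fin n) :
    ¬ Codominated (cycleGraph n) x := by
  rintro ⟨y, hyx, hsub⟩
  have hxy : (cycleGraph n).Adj x y := (hsub (Set.mem_insert y _)).resolve_left hyx
  rcases (cycleGraph_adj_iff (by omega)).1 hxy with rfl | rfl
  · refine cycleGraph_sub_two_not_mem_closedNbhd hn (hsub (Or.inr ?_))
    exact (cycleGraph_adj_iff (by omega)).2 (Or.inl (by ring))
  · refine cycleGraph_add_two_not_mem_closedNbhd hn (hsub (Or.inr ?_))
    exact (cycleGraph_adj_iff (by omega)).2 (Or.inr (by ring))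

/-- The witness is the independent set `{x + 2, x - 2}`: it misses `N[x]`, yet each neighbor
`x ± 1` of `x` is adjacent to one of its points. -/
lemma cycleGraph_not_sheddingOn (hn : 6 ≤ n) {A : Finset (Fin n)} (hA₁ : x + 2 ∈ A)
    (hA₂ : x - 2 ∈ A) : ¬ SheddingOn (cycleGraph n) A x := by
  intro hshed
  have hindep : IsIndep (cycleGraph n) {x + 2, x - 2} :=
    isIndep_pair_iff.2 (cycleGraph_not_adj_add_two_sub_two hn)
  have hfar : ∀ u ∈ ({x + 2, x - 2} : Set (Fin n)), u ∉ closedNbhd (cycleGraph n) x := by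
    rintro u (rfl | rfl)
    exacts [cycleGraph_add_two_not_mem_closedNbhd (by omega),
      cycleGraph_sub_two_not_mem_closedNbhd (by omega)]
  obtain ⟨v, -, hxv, hind⟩ :=
    hshed _ (by simp [Set.insert_subset_iff, hA₁, hA₂]) hfar hindep
  rcases (cycleGraph_adj_iff (by omega)).1 hxv with rfl | rfl
  · exact hind (Set.mem_insert _ _) (Set.mem_insert_of_mem _ (Set.mem_insert_of_mem _ rfl))
      ((cycleGraph_adj_iff (by omega)).2 (Or.inl (by ring)))
  · exact hind (Set.mem_insert _ _) (Set.mem_insert_of_mem _ (Set.mem_insert _ _))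
      ((cycleGraph_adj_iff (by omega)).2 (Or.inr (by ring)))

end cycleGraph

/-- for `n ≥ 6` the cycle `C_n` has no codominated vertex and is
not vertex decomposable. -/
theorem cycleGraph_not_vertexDecomposable (n : ℕ) (hn : 6 ≤ n) :
    (∀ x : Fin n, ¬ Codominated (cycleGraph n) x) ∧
      ¬ VertexDecomposable (cycleGraph n) := by
  have : NeZero n := ⟨by omega⟩
  refine ⟨cycleGraph_not_codominated (by omega), ?_⟩
  have h01 : (cycleGraph n).Adj 0 1 := (cycleGraph_adj_iff (by omega)).2 (Or.inr (by ring))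
  exact not_vertexDecomposableOn_of_forall_not_sheddingOn (Finset.mem_univ _) (Finset.mem_univ _)
    h01 fun x _ => cycleGraph_not_sheddingOn hn (Finset.mem_univ _) (Finset.mem_univ _)
end
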